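/- In a finite perfect-information game satisfying the no-indifference condition, all subgame-perfect equilibria (pure or behavioral mixed) induce, at every node, the same payoff vector; moreover every mixed SPE is outcome-equivalent to a pure SPE in the sense that its induced leaf distribution is supported on leaves all carrying the common SPE payoff vector. -/

import Mathlib

set_option linter.unusedVariables false

/-- A finite game tree with `n` players: each internal node is controlled by a
player in `Fin n` and has `k+1` children; leaves carry a payoff vector. -/
inductive GameTree (n : ℕ) : Type
  | leaf (u : Fin n → ℝ) : GameTree n
  | node (p : Fin n) (k : ℕ) (c : Fin (k + 1) → GameTree n) : GameTree n

/-- A pure strategy profile: a choice of child at every internal node. -/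
inductive PureProfile {n : ℕ} : GameTree n → Type
  | leaf {u : Fin n → ℝ} : PureProfile (.leaf u)
  | node {p : Fin n} {k : ℕ} {c : Fin (k + 1) → GameTree n}
      (ch : Fin (k + 1)) (sub : ∀ j, PureProfile (c j)) :
      PureProfile (.node p k c)

/-- The payoff vector induced by a pure strategy profile. -/
def payoff {n : ℕ} : {t : GameTree n} → PureProfile t → Fin n → ℝ
  | .leaf u, .leaf, i => u i
  | .node _ _ _, .node ch sub, i => payoff (sub ch) i

/-- `Dev i g g'` : `g'` is a unilateral deviation of `g` by player `i`
(they agree at every node not controlled by `i`). -/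
def Dev {n : ℕ} (i : Fin n) : {t : GameTree n} → PureProfile t → PureProfile t → Prop
  | .leaf _, _, _ => True
  | .node p _ _, .node ch sub, .node ch' sub' =>
      (p ≠ i → ch' = ch) ∧ ∀ j, Dev i (sub j) (sub' j)

/-- Subgame-perfect equilibrium for pure profiles: at every node, no player can
strictly improve her payoff in the subgame rooted there by a unilateral deviation. -/
def IsSPE {n : ℕ} : {t : GameTree n} → PureProfile t → Prop
  | .leaf _, _ => True
  | .node p k c, .node ch sub =>
      (∀ j, IsSPE (sub j)) ∧
      ∀ (i : Fin n) (g' : PureProfile (.node p k c)),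
        Dev i (.node ch sub) g' →
        payoff g' i ≤ payoff (PureProfile.node (p := p) ch sub) i

/-- A behavioral mixed strategy profile: a probability distribution over
children at every internal node. -/
inductive MixedProfile {n : ℕ} : GameTree n → Type
  | leaf {u : Fin n → ℝ} : MixedProfile (.leaf u)
  | node {p : Fin n} {k : ℕ} {c : Fin (k + 1) → GameTree n}
      (w : Fin (k + 1) → ℝ) (hw : ∀ j, 0 ≤ w j) (hsum : ∑ j, w j = 1)
      (sub : ∀ j, MixedProfile (c j)) :
      MixedProfile (.node p k c)

/-- Expected payoff vector of a behavioral mixed strategy profile. -/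
noncomputable def mpayoff {n : ℕ} : {t : GameTree n} → MixedProfile t → Fin n → ℝ
  | .leaf u, .leaf, i => u i
  | .node _ _ _, .node w _ _ sub, i => ∑ j, w j * mpayoff (sub j) i

/-- `MDev i f f'` : `f'` is a unilateral deviation of the mixed profile `f` by player `i`. -/
def MDev {n : ℕ} (i : Fin n) : {t : GameTree n} → MixedProfile t → MixedProfile t → Prop
  | .leaf _, _, _ => True
  | .node p _ _, .node w _ _ sub, .node w' _ _ sub' =>
      (p ≠ i → w' = w) ∧ ∀ j, MDev i (sub j) (sub' j)

/-- Subgame-perfect equilibrium for behavioral mixed profiles. -/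
noncomputable def MixedSPE {n : ℕ} : {t : GameTree n} → MixedProfile t → Prop
  | .leaf _, _ => True
  | .node p k c, .node w hw hs sub =>
      (∀ j, MixedSPE (sub j)) ∧
      ∀ (i : Fin n) (f' : MixedProfile (.node p k c)),
        MDev i (MixedProfile.node (p := p) w hw hs sub) f' →
        mpayoff f' i ≤ mpayoff (MixedProfile.node (p := p) w hw hs sub) i

/-- `InSupport f g` : at every internal node, the pure profile `g` selects an
action lying in the support of the mixed action of `f` at that node. -/
def InSupport {n : ℕ} : {t : GameTree n} → MixedProfile t → PureProfile t → Prop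
  | .leaf _, _, _ => True
  | .node _ _ _, .node w _ _ msub, .node ch psub =>
      0 < w ch ∧ ∀ j, InSupport (msub j) (psub j)

/-- The payoffs of leaves of the game tree. -/
def IsLeafPayoff {n : ℕ} : GameTree n → (Fin n → ℝ) → Prop
  | .leaf u, v => u = v
  | .node _ _ c, v => ∃ j, IsLeafPayoff (c j) v

/-- No-indifference condition: if two leaves give the same payoff to some
player, they give the same payoff to every player. -/
def NoIndifference {n : ℕ} (t : GameTree n) : Prop :=
  ∀ u v, IsLeafPayoff t u → IsLeafPayoff t v → (∃ i, u i = v i) → u = v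

/-- The Dirac (pure) behavioral profile associated with a pure profile. -/
noncomputable def toMixed {n : ℕ} : {t : GameTree n} → PureProfile t → MixedProfile t
  | .leaf _, .leaf => .leaf
  | .node p _ _, .node ch sub =>
      .node (p := p) (fun j => if j = ch then 1 else 0)
        (by intro j; by_cases h : j = ch <;> simp [h])
        (by simp)
        (fun j => toMixed (sub j))

/-- Two mixed profiles induce the same payoff vector at every node. -/
def MPayoffAgree {n : ℕ} : {t : GameTree n} → MixedProfile t → MixedProfile t → Prop
  | .leaf _, _, _ => True
  | .node p _ _, .node w hw hs sub, .node w' hw' hs' sub' =>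
      (∀ i, mpayoff (MixedProfile.node (p := p) w hw hs sub) i
          = mpayoff (MixedProfile.node (p := p) w' hw' hs' sub') i) ∧
      ∀ j, MPayoffAgree (sub j) (sub' j)

/-- The leaf distribution induced by the mixed profile is supported on leaves
whose payoff vector is `v`. -/
def SupportedOnValue {n : ℕ} : {t : GameTree n} → MixedProfile t → (Fin n → ℝ) → Prop
  | .leaf u, _, v => u = v
  | .node _ _ _, .node w _ _ sub, v => ∀ j, 0 < w j → SupportedOnValue (sub j) v

/-!
Backward induction. At a node controlled by `p`, deviating to a single child shows that each
child's value for `p` is at most the node's value; as the node's value is an average of the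
children's values, every child in the support attains it, so by no-indifference all of them carry
one and the same payoff vector, which is then a leaf payoff and the node's value. If two SPEs
agree below a node, each gives `p` at least the other's average there, so they give `p` the same
value, and no-indifference makes the whole vectors equal. A pure SPE, read as a Dirac behavioral
profile, is a mixed SPE, since mixing over children cannot beat the pure best reply.
-/

open Finset

section WeightedAverage

theorem sum_mul_eq_of_forall_ne_zero {ι R : Type*} [Fintype ι] [CommSemiring R] {w x : ι → R}
    {a : R} (hs : ∑ j, w j = 1) (hx : ∀ j, w j ≠ 0 → x j = a) : ∑ j, w j * x j = a :=
  calc ∑ j, w j * x j = ∑ j, w j * a := sum_congr rfl fun j _ => by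
        by_cases h0 : w j = 0
        · rw [h0, zero_mul, zero_mul]
        · rw [hx j h0]
    _ = a := by rw [← sum_mul, hs, one_mul]

variable {ι R : Type*} [Fintype ι] [CommRing R] [LinearOrder R] [IsStrictOrderedRing R]
  {w x : ι → R} {a : R}

theorem exists_pos_of_sum_eq_one (hs : ∑ j, w j = 1) : ∃ j, 0 < w j := by
  by_contra! h
  have : ∑ j, w j ≤ 0 := sum_nonpos fun j _ => h j
  linarith

theorem sum_mul_le_of_forall_le (hw : ∀ j, 0 ≤ w j) (hs : ∑ j, w j = 1)
    (hx : ∀ j, x j ≤ a) : ∑ j, w j * x j ≤ a :=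
  calc ∑ j, w j * x j ≤ ∑ j, w j * a := sum_le_sum fun j _ => mul_le_mul_of_nonneg_left (hx j) (hw j)
    _ = a := by rw [← sum_mul, hs, one_mul]

theorem eq_of_sum_mul_eq_of_forall_le (hw : ∀ j, 0 ≤ w j) (hs : ∑ j, w j = 1)
    (hx : ∀ j, x j ≤ a) (h : ∑ j, w j * x j = a) {j : ι} (hj : 0 < w j) : x j = a := by
  have hgap : ∑ j, w j * (a - x j) = 0 := by
    simp only [mul_sub, sum_sub_distrib, ← sum_mul, hs, one_mul, h, sub_self]
  have hterm := (sum_eq_zero_iff_of_nonneg fun j _ => mul_nonneg (hw j) (sub_nonneg.2 (hx j))).1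
    hgap j (mem_univ j)
  linarith [(mul_eq_zero.1 hterm).resolve_left hj.ne']

end WeightedAverage

section SPE

variable {n : ℕ}

theorem Dev.refl (i : Fin n) : ∀ {t : GameTree n} (g : PureProfile t), Dev i g g
  | .leaf _, .leaf => trivial
  | .node _ _ _, .node _ sub => ⟨fun _ => rfl, fun j => Dev.refl i (sub j)⟩

theorem MDev.refl (i : Fin n) : ∀ {t : GameTree n} (f : MixedProfile t), MDev i f f
  | .leaf _, .leaf => trivial
  | .node _ _ _, .node _ _ _ sub => ⟨fun _ => rfl, fun j => MDev.refl i (sub j)⟩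

theorem NoIndifference.child {p : Fin n} {k : ℕ} {c : Fin (k + 1) → GameTree n}
    (h : NoIndifference (.node p k c)) (j : Fin (k + 1)) : NoIndifference (c j) :=
  fun u v hu hv => h u v ⟨j, hu⟩ ⟨j, hv⟩

theorem MPayoffAgree.mpayoff_eq : ∀ {t : GameTree n} {f f' : MixedProfile t},
    MPayoffAgree f f' → mpayoff f = mpayoff f'
  | .leaf _, .leaf, .leaf, _ => rfl
  | .node _ _ _, .node _ _ _ _, .node _ _ _ _, h => funext h.1

noncomputable def MixedProfile.dirac {p : Fin n} {k : ℕ} {c : Fin (k + 1) → GameTree n}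
    (j : Fin (k + 1)) (sub : ∀ j, MixedProfile (c j)) : MixedProfile (.node p k c) :=
  .node (fun j' => if j' = j then 1 else 0) (fun j' => by split_ifs <;> norm_num) (by simp) sub

section Node

variable {p : Fin n} {k : ℕ} {c : Fin (k + 1) → GameTree n}

@[simp]
theorem mpayoff_dirac (j : Fin (k + 1)) (sub : ∀ j, MixedProfile (c j)) :
    mpayoff (MixedProfile.dirac (p := p) j sub) = mpayoff (sub j) := by
  funext i
  simp [MixedProfile.dirac, mpayoff]

theorem toMixed_node (ch : Fin (k + 1)) (sub : ∀ j, PureProfile (c j)) :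
    toMixed (PureProfile.node (p := p) ch sub) = .dirac ch fun j => toMixed (sub j) :=
  rfl

theorem IsSPE.payoff_child_le {ch : Fin (k + 1)} {sub : ∀ j, PureProfile (c j)}
    (hg : IsSPE (PureProfile.node (p := p) ch sub)) (j : Fin (k + 1)) :
    payoff (sub j) p ≤ payoff (PureProfile.node (p := p) ch sub) p :=
  hg.2 p (.node j sub) ⟨fun hp => absurd rfl hp, fun j' => Dev.refl p (sub j')⟩

theorem MixedSPE.mpayoff_child_le {w : Fin (k + 1) → ℝ} {hw : ∀ j, 0 ≤ w j}
    {hs : ∑ j, w j = 1} {sub : ∀ j, MixedProfile (c j)}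
    (hf : MixedSPE (MixedProfile.node (p := p) w hw hs sub)) (j : Fin (k + 1)) :
    mpayoff (sub j) p ≤ mpayoff (MixedProfile.node (p := p) w hw hs sub) p := by
  simpa using hf.2 p (.dirac j sub) ⟨fun hp => absurd rfl hp, fun j' => MDev.refl p (sub j')⟩

theorem MixedSPE.mpayoff_le_of_mpayoff_child_eq {w w' : Fin (k + 1) → ℝ} {hw : ∀ j, 0 ≤ w j}
    {hs : ∑ j, w j = 1} {hw' : ∀ j, 0 ≤ w' j} {hs' : ∑ j, w' j = 1}
    {sub sub' : ∀ j, MixedProfile (c j)}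
    (hf' : MixedSPE (MixedProfile.node (p := p) w' hw' hs' sub'))
    (hsub : ∀ j, mpayoff (sub j) = mpayoff (sub' j)) :
    mpayoff (MixedProfile.node (p := p) w hw hs sub) p
      ≤ mpayoff (MixedProfile.node (p := p) w' hw' hs' sub') p :=
  sum_mul_le_of_forall_le hw hs fun j => hsub j ▸ hf'.mpayoff_child_le j

end Node

theorem mpayoff_le_of_mDev_toMixed {i : Fin n} :
    ∀ {t : GameTree n} {g : PureProfile t} {f' : MixedProfile t},
      IsSPE g → MDev i (toMixed g) f' → mpayoff f' i ≤ payoff g i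
  | .leaf _, .leaf, .leaf, _, _ => le_rfl
  | .node p _ _, .node ch sub, .node w' hw' hs' sub', hg, hdev => by
      obtain ⟨hw'eq, hdev⟩ := hdev
      have ih j : mpayoff (sub' j) i ≤ payoff (sub j) i :=
        mpayoff_le_of_mDev_toMixed (hg.1 j) (hdev j)
      by_cases hp : p = i
      · subst hp
        exact sum_mul_le_of_forall_le hw' hs' fun j => (ih j).trans (hg.payoff_child_le j)
      · obtain rfl := hw'eq hp
        calc mpayoff (MixedProfile.node (p := p) _ hw' hs' sub') i = mpayoff (sub' ch) i := by
              simp [mpayoff]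
          _ ≤ payoff (sub ch) i := ih ch

theorem mpayoff_toMixed : ∀ {t : GameTree n} (g : PureProfile t), mpayoff (toMixed g) = payoff g
  | .leaf _, .leaf => rfl
  | .node _ _ _, .node ch sub => by
      rw [toMixed_node, mpayoff_dirac, mpayoff_toMixed (sub ch)]
      rfl

theorem IsSPE.mixedSPE_toMixed : ∀ {t : GameTree n} {g : PureProfile t},
    IsSPE g → MixedSPE (toMixed g)
  | .leaf _, .leaf, _ => trivial
  | .node p _ _, .node ch sub, hg =>
      ⟨fun j => (hg.1 j).mixedSPE_toMixed, fun i _ hdev => by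
        show _ ≤ mpayoff (toMixed (PureProfile.node (p := p) ch sub)) i
        rw [mpayoff_toMixed]
        exact mpayoff_le_of_mDev_toMixed hg hdev⟩

theorem MixedSPE.isLeafPayoff_and_supportedOnValue :
    ∀ {t : GameTree n} {f : MixedProfile t}, NoIndifference t → MixedSPE f →
      IsLeafPayoff t (mpayoff f) ∧ SupportedOnValue f (mpayoff f)
  | .leaf _, .leaf, _, _ => ⟨rfl, rfl⟩
  | .node p _ _, .node w hw hs sub, hni, hf => by
      have ih j := (hf.1 j).isLeafPayoff_and_supportedOnValue (hni.child j)
      have hattain : ∀ j, 0 < w j →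
          mpayoff (sub j) p = mpayoff (MixedProfile.node (p := p) w hw hs sub) p :=
        fun _ => eq_of_sum_mul_eq_of_forall_le hw hs hf.mpayoff_child_le rfl
      obtain ⟨j₀, hj₀⟩ := exists_pos_of_sum_eq_one hs
      have hsame : ∀ j, 0 < w j → mpayoff (sub j) = mpayoff (sub j₀) := fun j hj =>
        hni _ _ ⟨j, (ih j).1⟩ ⟨j₀, (ih j₀).1⟩ ⟨p, (hattain j hj).trans (hattain j₀ hj₀).symm⟩
      have hvalue : mpayoff (MixedProfile.node (p := p) w hw hs sub) = mpayoff (sub j₀) :=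
        funext fun i => sum_mul_eq_of_forall_ne_zero hs fun j hj =>
          congrFun (hsame j ((hw j).lt_of_ne' hj)) i
      refine ⟨hvalue ▸ ⟨j₀, (ih j₀).1⟩, fun j hj => ?_⟩
      rw [hvalue, ← hsame j hj]
      exact (ih j).2

theorem MixedSPE.mpayoffAgree : ∀ {t : GameTree n} {f f' : MixedProfile t},
    NoIndifference t → MixedSPE f → MixedSPE f' → MPayoffAgree f f'
  | .leaf _, .leaf, .leaf, _, _, _ => trivial
  | .node p _ _, .node w hw hs sub, .node w' hw' hs' sub', hni, hf, hf' => by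
      have hsub j : MPayoffAgree (sub j) (sub' j) := (hf.1 j).mpayoffAgree (hni.child j) (hf'.1 j)
      have hsub_eq j := (hsub j).mpayoff_eq
      have hp := le_antisymm (hf'.mpayoff_le_of_mpayoff_child_eq hsub_eq)
        (hf.mpayoff_le_of_mpayoff_child_eq fun j => (hsub_eq j).symm)
      exact ⟨congrFun (hni _ _ (hf.isLeafPayoff_and_supportedOnValue hni).1
        (hf'.isLeafPayoff_and_supportedOnValue hni).1 ⟨p, hp⟩), hsub⟩

end SPE

theorem stmt15 {n : ℕ} (t : GameTree n) (hni : NoIndifference t) :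
    (∀ f f' : MixedProfile t, MixedSPE f → MixedSPE f' → MPayoffAgree f f') ∧
    (∀ (g : PureProfile t) (f : MixedProfile t),
      IsSPE g → MixedSPE f → MPayoffAgree (toMixed g) f) ∧
    (∀ f : MixedProfile t, MixedSPE f →
      SupportedOnValue f (fun i => mpayoff f i)) :=
  ⟨fun _ _ hf hf' => hf.mpayoffAgree hni hf',
    fun _ _ hg hf => hg.mixedSPE_toMixed.mpayoffAgree hni hf,
    fun _ hf => (hf.isLeafPayoff_and_supportedOnValue hni).2⟩
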